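/- The codifferential of the Kähler form vanishes: for every X ∈ 𝔪^ℂ, (δΩ)(X) := Σ_{β ∈ R_Θ⁺} [ (∇_{V_β} Ω)(V_β, X) + (∇_{J V_β} Ω)(J V_β, X) ] = 0. (Hence every invariant almost Hermitian structure on a flag manifold is almost semi-Kähler.) -/

import Mathlib

/-!
Every summand vanishes. With `c = (2λ_β)^{-1/2}` one has `V_β = c (X_β - X_{-β})` and
`J V_β = i c ε_β (X_β + X_{-β})`, and `(i c ε_β)² = -c²`, so bilinearity of `(∇_· Ω)(·, x)` reduces the
`β`-summand to `-2c² ((∇_{X_β} Ω)(X_{-β}, x) + (∇_{X_{-β}} Ω)(X_β, x))`.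

Each term `(∇_{X_α} Ω)(X_{-α}, x) = g(X_{-α}, ∇(X_α, Jx)) - g(X_{-α}, J ∇(X_α, x))` is zero: the functional
`g(X_{-α}, ·)` only sees the `X_α`-component, on which `J` is the scalar `i ε_α`, and `∇(X_α, y)` has no
`X_α`-component for `y ∈ 𝔪^ℂ`. For the bracket part this is because `[X_α, X_γ]` has weight `α + γ ≠ α`;
for the `U` part, the defining identity of `U` with `Z = X_{-α}` reduces it to the bracket part at `-α`
and to `π_𝔪 [X_{-α}, X_α] = π_𝔪 H_{-α} = 0`.
-/

open Submodule

theorem bilin_diag_smul_sub_add_diag_smul_add {K M : Type*} [CommRing K] [AddCommGroup M]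
    [Module K M] (B : M →ₗ[K] M →ₗ[K] K) {s t : K} (hst : t * t = -(s * s)) (u v : M) :
    B (s • (u - v)) (s • (u - v)) + B (t • (u + v)) (t • (u + v)) =
      -(2 * (s * s)) * (B u v + B v u) := by
  simp only [map_smul, map_sub, map_add, LinearMap.smul_apply, LinearMap.sub_apply,
    LinearMap.add_apply, smul_eq_mul]
  linear_combination (B u u + B u v + B v u + B v v) * hst

section Span

variable {K L V : Type*} [CommRing K] [AddCommGroup L] [Module K L] {X : V → L} {S : Set V}

theorem map_mem_span_of_eigen {J : L →ₗ[K] L} {μ : V → K} (hJ : ∀ δ ∈ S, J (X δ) = μ δ • X δ)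
    {u : L} (hu : u ∈ span K (X '' S)) : J u ∈ span K (X '' S) := by
  refine span_le (p := (span K (X '' S)).comap J).2 ?_ hu
  rintro _ ⟨δ, hδ, rfl⟩
  simpa [hJ δ hδ] using smul_mem _ (μ δ) (subset_span (Set.mem_image_of_mem X hδ))

theorem apply_eq_zero_of_mem_span_diff {f : L →ₗ[K] K} {α : V}
    (hf : ∀ δ ∈ S, δ ≠ α → f (X δ) = 0) {u : L} (hu : u ∈ span K (X '' (S \ {α}))) : f u = 0 := by
  refine span_le (p := LinearMap.ker f).2 ?_ hu
  rintro _ ⟨δ, ⟨hδ, hne⟩, rfl⟩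
  exact hf δ hδ hne

theorem apply_map_eq_mul_of_eigen {f : L →ₗ[K] K} {J : L →ₗ[K] L} {μ : V → K} {α : V}
    (hf : ∀ δ ∈ S, δ ≠ α → f (X δ) = 0) (hJ : ∀ δ ∈ S, J (X δ) = μ δ • X δ)
    {u : L} (hu : u ∈ span K (X '' S)) : f (J u) = μ α * f u := by
  refine LinearMap.eqOn_span' (f := f ∘ₗ J) (g := μ α • f) ?_ hu
  rintro _ ⟨δ, hδ, rfl⟩
  by_cases hδα : δ = α
  · subst hδα
    simp [hJ δ hδ]
  · simp [hJ δ hδ, hf δ hδ hδα]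

end Span

section Roots

variable {V : Type*} [AddCommGroup V] {R RΘ RΘc : Finset V}

theorem neg_mem_of_mem_compl {G : AddSubgroup V} (hRneg : ∀ α ∈ R, -α ∈ R)
    (hRΘ : ∀ α, α ∈ RΘ ↔ α ∈ R ∧ α ∈ G) (hRΘc : ∀ α, α ∈ RΘc ↔ α ∈ R ∧ α ∉ RΘ)
    {α : V} (hα : α ∈ RΘc) : -α ∈ RΘc := by
  obtain ⟨hαR, hαΘ⟩ := (hRΘc α).1 hα
  refine (hRΘc (-α)).2 ⟨hRneg α hαR, fun h => hαΘ ((hRΘ α).2 ⟨hαR, ?_⟩)⟩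
  simpa using neg_mem ((hRΘ (-α)).1 h).2

variable {L : Type*} [LieRing L] [LieAlgebra ℂ L] {X H : V → L} {n : V → V → ℝ}
  {πm : L →ₗ[ℂ] L}

theorem proj_lie_mem_span_diff (hR0 : (0 : V) ∉ R) (hRΘc : ∀ α, α ∈ RΘc ↔ α ∈ R ∧ α ∉ RΘ)
    (hbH : ∀ α ∈ R, ⁅X α, X (-α)⁆ = H α)
    (hbR : ∀ α ∈ R, ∀ β ∈ R, α + β ∈ R → ⁅X α, X β⁆ = (n α β : ℂ) • X (α + β))
    (hb0 : ∀ α ∈ R, ∀ β ∈ R, α + β ∉ R → α + β ≠ 0 → ⁅X α, X β⁆ = (0 : L))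
    (hπm1 : ∀ α ∈ RΘc, πm (X α) = X α) (hπm2 : ∀ α ∈ RΘ, πm (X α) = 0)
    (hπm3 : ∀ α ∈ R, πm (H α) = 0) {α : V} (hα : α ∈ R) {y : L}
    (hy : y ∈ span ℂ (X '' (RΘc : Set V))) :
    πm ⁅X α, y⁆ ∈ span ℂ (X '' ((RΘc : Set V) \ {α})) := by
  refine span_le (p := (span ℂ (X '' ((RΘc : Set V) \ {α}))).comap
    (πm ∘ₗ LieAlgebra.ad ℂ L (X α))).2 ?_ hy
  rintro _ ⟨γ, hγ, rfl⟩
  obtain ⟨hγR, -⟩ := (hRΘc γ).1 hγ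
  simp only [SetLike.mem_coe, mem_comap, LinearMap.comp_apply, LieAlgebra.ad_apply]
  by_cases hsum0 : α + γ = 0
  · rw [← neg_eq_of_add_eq_zero_right hsum0, hbH α hα, hπm3 α hα]
    exact zero_mem _
  by_cases hsumR : α + γ ∈ R
  · rw [hbR α hα γ hγR hsumR, map_smul]
    refine smul_mem _ _ ?_
    by_cases hsumΘ : α + γ ∈ RΘ
    · rw [hπm2 _ hsumΘ]
      exact zero_mem _
    · have hsum : α + γ ∈ RΘc := (hRΘc _).2 ⟨hsumR, hsumΘ⟩
      rw [hπm1 _ hsum]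
      refine subset_span ⟨α + γ, ⟨hsum, fun h => hR0 ?_⟩, rfl⟩
      rwa [← add_eq_left.1 (Set.mem_singleton_iff.1 h)]
  · rw [hb0 α hα γ hγR hsumR hsum0, map_zero]
    exact zero_mem _

end Roots

section Connection

variable {V L : Type*} [LieRing L] [LieAlgebra ℂ L] {X : V → L} {S : Finset V} {α : V}
  {g : L →ₗ[ℂ] L →ₗ[ℂ] ℂ} {lam : V → ℂ} {πm : L →ₗ[ℂ] L} {U : L →ₗ[ℂ] L →ₗ[ℂ] L}
  {nab : L → L → L}

theorem nab_mem_span (hnab : ∀ x y : L, nab x y = -(1/2 : ℂ) • πm ⁅x, y⁆ + U x y)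
    (hUmem : ∀ x y : L, U x y ∈ span ℂ (X '' (S : Set V))) {y : L}
    (hproj : πm ⁅X α, y⁆ ∈ span ℂ (X '' ((S : Set V) \ {α}))) :
    nab (X α) y ∈ span ℂ (X '' (S : Set V)) := by
  rw [hnab]
  exact add_mem (smul_mem _ _ (span_mono (Set.image_mono Set.sdiff_subset) hproj)) (hUmem _ _)

variable [AddCommGroup V] [DecidableEq V]

theorem pairing_neg_eq_zero (hg : ∀ a ∈ S, ∀ b ∈ S, g (X a) (X b) = if b = -a then lam a else 0)
    (hα : -α ∈ S) : ∀ δ ∈ S, δ ≠ α → g (X (-α)) (X δ) = 0 := by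
  intro δ hδ hne
  rw [hg _ hα δ hδ, neg_neg, if_neg hne]

theorem pairing_nab_eq_zero (hnab : ∀ x y : L, nab x y = -(1/2 : ℂ) • πm ⁅x, y⁆ + U x y)
    (hgsym : ∀ x y : L, g x y = g y x)
    (hU : ∀ x ∈ span ℂ (X '' (S : Set V)), ∀ y ∈ span ℂ (X '' (S : Set V)),
      ∀ z ∈ span ℂ (X '' (S : Set V)), (2 : ℂ) * g (U x y) z = g (πm ⁅z, x⁆) y + g x (πm ⁅z, y⁆))
    (hg : ∀ a ∈ S, ∀ b ∈ S, g (X a) (X b) = if b = -a then lam a else 0)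
    (hα : α ∈ S) (hα' : -α ∈ S) (hH : πm ⁅X (-α), X α⁆ = 0) {y : L}
    (hy : y ∈ span ℂ (X '' (S : Set V)))
    (hproj : πm ⁅X α, y⁆ ∈ span ℂ (X '' ((S : Set V) \ {α})))
    (hproj' : πm ⁅X (-α), y⁆ ∈ span ℂ (X '' ((S : Set V) \ {-α}))) :
    g (X (-α)) (nab (X α) y) = 0 := by
  have hbracket : g (X (-α)) (πm ⁅X α, y⁆) = 0 :=
    apply_eq_zero_of_mem_span_diff (pairing_neg_eq_zero hg hα') hproj
  have hbracket' : g (X α) (πm ⁅X (-α), y⁆) = 0 := by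
    simpa using apply_eq_zero_of_mem_span_diff (pairing_neg_eq_zero hg (by rwa [neg_neg])) hproj'
  have hUpart : g (U (X α) y) (X (-α)) = 0 := by
    have h := hU _ (subset_span ⟨α, hα, rfl⟩) y hy _ (subset_span ⟨-α, hα', rfl⟩)
    rw [hH, hbracket', map_zero, LinearMap.zero_apply, add_zero] at h
    exact (mul_eq_zero.1 h).resolve_left two_ne_zero
  rw [hnab, map_add, map_smul, hbracket, hgsym, hUpart, smul_zero, add_zero]

variable {J : L →ₗ[ℂ] L} {covOm : L → L → L → ℂ}

theorem covOm_root_neg_eq_zero {μ : V → ℂ}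
    (hcovOm : ∀ x y z : L, covOm x y z = g y (nab x (J z) - J (nab x z)))
    (hJ : ∀ δ ∈ S, J (X δ) = μ δ • X δ)
    (hg : ∀ a ∈ S, ∀ b ∈ S, g (X a) (X b) = if b = -a then lam a else 0) (hα' : -α ∈ S)
    (hnab_mem : ∀ y ∈ span ℂ (X '' (S : Set V)), nab (X α) y ∈ span ℂ (X '' (S : Set V)))
    (hnab_pairing : ∀ y ∈ span ℂ (X '' (S : Set V)), g (X (-α)) (nab (X α) y) = 0)
    {x : L} (hx : x ∈ span ℂ (X '' (S : Set V))) : covOm (X α) (X (-α)) x = 0 := by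
  rw [hcovOm, map_sub, hnab_pairing _ (map_mem_span_of_eigen hJ hx),
    apply_map_eq_mul_of_eigen (pairing_neg_eq_zero hg hα') hJ (hnab_mem x hx),
    hnab_pairing x hx, mul_zero, sub_zero]

theorem covOm_smul_sub_add_covOm_smul_add
    (hnab : ∀ x y : L, nab x y = -(1/2 : ℂ) • πm ⁅x, y⁆ + U x y)
    (hcovOm : ∀ x y z : L, covOm x y z = g y (nab x (J z) - J (nab x z)))
    {s t : ℂ} (hst : t * t = -(s * s)) (u v z : L) :
    covOm (s • (u - v)) (s • (u - v)) z + covOm (t • (u + v)) (t • (u + v)) z =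
      -(2 * (s * s)) * (covOm u v z + covOm v u z) := by
  let N : L →ₗ[ℂ] L →ₗ[ℂ] L :=
    -(1/2 : ℂ) • (LieAlgebra.ad ℂ L : L →ₗ[ℂ] Module.End ℂ L).compr₂ πm + U
  let B : L →ₗ[ℂ] L →ₗ[ℂ] ℂ := g.flip ∘ₗ (N.flip (J z) - J ∘ₗ N.flip z)
  have hB : ∀ x y, covOm x y z = B x y := fun x y => by simp [B, N, hcovOm, hnab]
  simp only [hB]
  exact bilin_diag_smul_sub_add_diag_smul_add B hst u v

theorem covOm_add_covOm_map_eq_zero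
    (hnab : ∀ x y : L, nab x y = -(1/2 : ℂ) • πm ⁅x, y⁆ + U x y)
    (hcovOm : ∀ x y z : L, covOm x y z = g y (nab x (J z) - J (nab x z)))
    {e : ℂ} (he : e * e = 1) {u v z : L} (hJu : J u = (Complex.I * e) • u)
    (hJv : J v = -(Complex.I * e) • v) (huv : covOm u v z = 0) (hvu : covOm v u z = 0) (c : ℂ) :
    covOm (c • (u - v)) (c • (u - v)) z + covOm (J (c • (u - v))) (J (c • (u - v))) z = 0 := by
  have hJ : J (c • (u - v)) = (c * (Complex.I * e)) • (u + v) := by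
    rw [map_smul, map_sub, hJu, hJv]
    module
  have hsq : c * (Complex.I * e) * (c * (Complex.I * e)) = -(c * c) := by
    linear_combination (c * c * (e * e)) * Complex.I_mul_I - (c * c) * he
  rw [hJ, covOm_smul_sub_add_covOm_smul_add hnab hcovOm hsq, huv, hvu, add_zero, mul_zero]

end Connection

theorem stmt13_general
    (L : Type*) [LieRing L] [LieAlgebra ℂ L]
    (V : Type*) [AddCommGroup V] [DecidableEq V]
    (R : Finset V) (hR0 : (0 : V) ∉ R) (hRneg : ∀ α ∈ R, -α ∈ R)
    (Rpos : Finset V)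
    (Θ : Finset V)
    (RΘ : Finset V)
    (hRΘ : ∀ α, α ∈ RΘ ↔ α ∈ R ∧ α ∈ AddSubgroup.closure (Θ : Set V))
    (RΘc : Finset V) (hRΘc : ∀ α, α ∈ RΘc ↔ α ∈ R ∧ α ∉ RΘ)
    (X H : V → L) (n : V → V → ℝ)
    (hbH : ∀ α ∈ R, ⁅X α, X (-α)⁆ = H α)
    (hbR : ∀ α ∈ R, ∀ β ∈ R, α + β ∈ R → ⁅X α, X β⁆ = (n α β : ℂ) • X (α + β))
    (hb0 : ∀ α ∈ R, ∀ β ∈ R, α + β ∉ R → α + β ≠ 0 → ⁅X α, X β⁆ = (0 : L))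
    (πm : L →ₗ[ℂ] L)
    (hπm1 : ∀ α ∈ RΘc, πm (X α) = X α)
    (hπm2 : ∀ α ∈ RΘ, πm (X α) = 0)
    (hπm3 : ∀ α ∈ R, πm (H α) = 0)
    (lam : V → ℝ)
    (g : L →ₗ[ℂ] L →ₗ[ℂ] ℂ) (hgsym : ∀ x y : L, g x y = g y x)
    (hg : ∀ α ∈ RΘc, ∀ β ∈ RΘc, g (X α) (X β) = if β = -α then (lam α : ℂ) else 0)
    (U : L →ₗ[ℂ] L →ₗ[ℂ] L)
    (hUmem : ∀ x y : L, U x y ∈ Submodule.span ℂ (X '' (RΘc : Set V)))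
    (hU : ∀ x ∈ Submodule.span ℂ (X '' (RΘc : Set V)),
          ∀ y ∈ Submodule.span ℂ (X '' (RΘc : Set V)),
          ∀ z ∈ Submodule.span ℂ (X '' (RΘc : Set V)),
      (2 : ℂ) * g (U x y) z = g (πm ⁅z, x⁆) y + g x (πm ⁅z, y⁆))
    (eps : V → ℝ) (heps1 : ∀ α ∈ RΘc, eps α = 1 ∨ eps α = -1)
    (heps2 : ∀ α : V, eps (-α) = - eps α)
    (J : L →ₗ[ℂ] L)
    (hJ : ∀ α ∈ RΘc, J (X α) = (Complex.I * (eps α : ℂ)) • X α)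
    (nab : L → L → L)
    (hnab : ∀ x y : L, nab x y = -(1/2 : ℂ) • πm ⁅x, y⁆ + U x y)
    (covOm : L → L → L → ℂ)
    (hcovOm : ∀ x y z : L, covOm x y z = g y (nab x (J z) - J (nab x z)))
    (Rcpos : Finset V) (hRcpos : ∀ α, α ∈ Rcpos ↔ α ∈ RΘc ∧ α ∈ Rpos)
    (Vv : V → L)
    (hVv : ∀ α : V, Vv α = (((Real.sqrt (2 * lam α))⁻¹ : ℝ) : ℂ) • (X α - X (-α)))
    :
    ∀ x ∈ Submodule.span ℂ (X '' (RΘc : Set V)),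
      ∑ β ∈ Rcpos,
        (covOm (Vv β) (Vv β) x + covOm (J (Vv β)) (J (Vv β)) x) = 0 := by
  have hneg : ∀ α ∈ RΘc, -α ∈ RΘc := fun α hα => neg_mem_of_mem_compl hRneg hRΘ hRΘc hα
  have hproj : ∀ α ∈ R, ∀ y ∈ Submodule.span ℂ (X '' (RΘc : Set V)),
      πm ⁅X α, y⁆ ∈ Submodule.span ℂ (X '' ((RΘc : Set V) \ {α})) :=
    fun α hα y hy => proj_lie_mem_span_diff hR0 hRΘc hbH hbR hb0 hπm1 hπm2 hπm3 hα hy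
  have hvanish : ∀ α ∈ RΘc, ∀ x ∈ Submodule.span ℂ (X '' (RΘc : Set V)),
      covOm (X α) (X (-α)) x = 0 := by
    intro α hα x hx
    have hαR : α ∈ R := ((hRΘc α).1 hα).1
    have hH : πm ⁅X (-α), X α⁆ = 0 := by
      rw [← hπm3 _ (hRneg α hαR), ← hbH (-α) (hRneg α hαR), neg_neg]
    exact covOm_root_neg_eq_zero hcovOm hJ hg (hneg α hα)
      (fun y hy => nab_mem_span hnab hUmem (hproj α hαR y hy))
      (fun y hy => pairing_nab_eq_zero hnab hgsym hU hg hα (hneg α hα) hH hy (hproj α hαR y hy)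
        (hproj (-α) (hRneg α hαR) y hy)) hx
  intro x hx
  refine Finset.sum_eq_zero fun β hβpos => ?_
  have hβ : β ∈ RΘc := ((hRcpos β).1 hβpos).1
  have he : (eps β : ℂ) * eps β = 1 := by rcases heps1 β hβ with h | h <;> simp [h]
  have hJneg : J (X (-β)) = -(Complex.I * eps β) • X (-β) := by
    rw [hJ _ (hneg β hβ), heps2, Complex.ofReal_neg, mul_neg]
  rw [hVv]
  exact covOm_add_covOm_map_eq_zero hnab hcovOm he (hJ β hβ) hJneg (hvanish β hβ x hx)
    (by simpa using hvanish (-β) (hneg β hβ) x hx) _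

theorem stmt13
    (L : Type*) [LieRing L] [LieAlgebra ℂ L]
    (V : Type*) [AddCommGroup V] [DecidableEq V]
    (R : Finset V) (hR0 : (0 : V) ∉ R) (hRneg : ∀ α ∈ R, -α ∈ R)
    (Rpos : Finset V) (hposR : Rpos ⊆ R)
    (hposneg : ∀ α ∈ R, α ∈ Rpos ↔ -α ∉ Rpos)
    (Sig : Finset V) (hSigpos : Sig ⊆ Rpos)
    (Θ : Finset V) (hΘSig : Θ ⊆ Sig)
    (RΘ : Finset V)
    (hRΘ : ∀ α, α ∈ RΘ ↔ α ∈ R ∧ α ∈ AddSubgroup.closure (Θ : Set V))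
    (RΘc : Finset V) (hRΘc : ∀ α, α ∈ RΘc ↔ α ∈ R ∧ α ∉ RΘ)
    (X H : V → L) (n : V → V → ℝ)
    (hbH : ∀ α ∈ R, ⁅X α, X (-α)⁆ = H α)
    (hbR : ∀ α ∈ R, ∀ β ∈ R, α + β ∈ R → ⁅X α, X β⁆ = (n α β : ℂ) • X (α + β))
    (hb0 : ∀ α ∈ R, ∀ β ∈ R, α + β ∉ R → α + β ≠ 0 → ⁅X α, X β⁆ = (0 : L))
    (hn1 : ∀ α β : V, n α β = - n β α)
    (hn2 : ∀ α β : V, n α β = - n (-α) (-β))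
    (hn3 : ∀ α β γ : V, α + β + γ = 0 → n α β = n β γ ∧ n β γ = n γ α)
    (πm : L →ₗ[ℂ] L)
    (hπm1 : ∀ α ∈ RΘc, πm (X α) = X α)
    (hπm2 : ∀ α ∈ RΘ, πm (X α) = 0)
    (hπm3 : ∀ α ∈ R, πm (H α) = 0)
    (lam : V → ℝ) (hlam1 : ∀ α ∈ RΘc, 0 < lam α) (hlam2 : ∀ α : V, lam (-α) = lam α)
    (g : L →ₗ[ℂ] L →ₗ[ℂ] ℂ) (hgsym : ∀ x y : L, g x y = g y x)
    (hg : ∀ α ∈ RΘc, ∀ β ∈ RΘc, g (X α) (X β) = if β = -α then (lam α : ℂ) else 0)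
    (hgnd : ∀ x ∈ Submodule.span ℂ (X '' (RΘc : Set V)),
      (∀ z ∈ Submodule.span ℂ (X '' (RΘc : Set V)), g x z = 0) → x = 0)
    (U : L →ₗ[ℂ] L →ₗ[ℂ] L) (hUsym : ∀ x y : L, U x y = U y x)
    (hUmem : ∀ x y : L, U x y ∈ Submodule.span ℂ (X '' (RΘc : Set V)))
    (hU : ∀ x ∈ Submodule.span ℂ (X '' (RΘc : Set V)),
          ∀ y ∈ Submodule.span ℂ (X '' (RΘc : Set V)),
          ∀ z ∈ Submodule.span ℂ (X '' (RΘc : Set V)),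
      (2 : ℂ) * g (U x y) z = g (πm ⁅z, x⁆) y + g x (πm ⁅z, y⁆))
    (eps : V → ℝ) (heps1 : ∀ α ∈ RΘc, eps α = 1 ∨ eps α = -1)
    (heps2 : ∀ α : V, eps (-α) = - eps α)
    (J : L →ₗ[ℂ] L)
    (hJ : ∀ α ∈ RΘc, J (X α) = (Complex.I * (eps α : ℂ)) • X α)
    (nab : L → L → L)
    (hnab : ∀ x y : L, nab x y = -(1/2 : ℂ) • πm ⁅x, y⁆ + U x y)
    (covOm : L → L → L → ℂ)
    (hcovOm : ∀ x y z : L, covOm x y z = g y (nab x (J z) - J (nab x z)))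
    (Rcpos : Finset V) (hRcpos : ∀ α, α ∈ Rcpos ↔ α ∈ RΘc ∧ α ∈ Rpos)
    (Vv : V → L)
    (hVv : ∀ α : V, Vv α = (((Real.sqrt (2 * lam α))⁻¹ : ℝ) : ℂ) • (X α - X (-α)))
    :
    ∀ x ∈ Submodule.span ℂ (X '' (RΘc : Set V)),
      ∑ β ∈ Rcpos,
        (covOm (Vv β) (Vv β) x + covOm (J (Vv β)) (J (Vv β)) x) = 0 :=
  stmt13_general L V R hR0 hRneg Rpos Θ RΘ hRΘ RΘc hRΘc X H n hbH hbR hb0 πm hπm1 hπm2 hπm3 lam g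
    hgsym hg U hUmem hU eps heps1 heps2 J hJ nab hnab covOm hcovOm Rcpos hRcpos Vv hVv
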